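/- arXiv:1006.1208 — 2 statements merged into one kernel-verified Lean document; each statement's English description precedes it below -/
import Mathlib

section
/- Let F be a field and L a finite-dimensional Lie algebra over F whose minimal number of generators equals its dimension. Then either L is abelian, or L decomposes as L = F·x ⊕ A, where A is an abelian ideal of codimension 1 in L and ad(x) restricted to A is the identity map. -/
/-!
If `⁅x, y⁆ ∉ span {x, y}`, a hyperplane containing `x` and `y` but not `⁅x, y⁆` already
generates `L`, so `d(L) < dim L`. Hence every plane is a subalgebra, and `ad x` acts on
`L ⧸ F x` with every vector an eigenvector, i.e. as a scalar `λ x`. Comparing `⁅x, y⁆` with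
`⁅y, x⁆` gives `⁅x, y⁆ = λ x • y - λ y • x`, which forces `λ` to be linear. If `λ ≠ 0`, then
`A = ker λ` is an abelian ideal and any `x` with `λ x = 1` acts on it as the identity.
-/

/-- The minimal number of generators of a Lie algebra `L` over `R`:
the least cardinality of a finite subset whose generated Lie subalgebra is all of `L`. -/
noncomputable def lieD (R L : Type*) [CommRing R] [LieRing L] [LieAlgebra R L] : ℕ :=
  sInf {n | ∃ s : Finset L, s.card = n ∧ LieSubalgebra.lieSpan R L ↑s = ⊤}

open Submodule

section

variable {F L : Type*} [Field F] [LieRing L] [LieAlgebra F L]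

lemma lieSpan_span (s : Set L) :
    LieSubalgebra.lieSpan F L (span F s : Set L) = LieSubalgebra.lieSpan F L s :=
  le_antisymm (LieSubalgebra.lieSpan_le.mpr LieSubalgebra.submodule_span_le_lieSpan)
    (LieSubalgebra.lieSpan_mono subset_span)

lemma lieD_le_finrank_of_lieSpan_eq_top [FiniteDimensional F L] (H : Submodule F L)
    (hH : LieSubalgebra.lieSpan F L (H : Set L) = ⊤) : lieD F L ≤ Module.finrank F H := by
  obtain ⟨s, -, hspan, hli⟩ := exists_linearIndependent F (H : Set L)
  have : Fintype s := hli.setFinite.fintype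
  refine Nat.sInf_le ⟨s.toFinset, ?_, ?_⟩
  · rw [← finrank_span_set_eq_card hli, hspan, span_eq]
  · rw [Set.coe_toFinset, ← lieSpan_span, hspan, span_eq, hH]

lemma lieSpan_eq_top_of_isCoatom {H : Submodule F L} (hH : IsCoatom H) {x y : L}
    (hx : x ∈ H) (hy : y ∈ H) (hxy : ⁅x, y⁆ ∉ H) :
    LieSubalgebra.lieSpan F L (H : Set L) = ⊤ := by
  set K := LieSubalgebra.lieSpan F L (H : Set L)
  have hHK : H ≤ K.toSubmodule := fun _ h => LieSubalgebra.subset_lieSpan h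
  have hxyK : ⁅x, y⁆ ∈ K := K.lie_mem (hHK hx) (hHK hy)
  rw [← LieSubalgebra.toSubmodule_eq_top]
  exact hH.2 _ (hHK.lt_of_ne fun h => hxy (h ▸ hxyK))

lemma lie_mem_span_pair_of_lieD_eq_finrank [FiniteDimensional F L]
    (h : lieD F L = Module.finrank F L) (x y : L) : ⁅x, y⁆ ∈ span F {x, y} := by
  by_contra hxy
  obtain ⟨f, hf, hmap⟩ := exists_dual_map_eq_bot_of_notMem hxy inferInstance
  have hf0 : f ≠ 0 := fun h0 => hf (by simp [h0])
  have hker : span F {x, y} ≤ LinearMap.ker f := LinearMap.le_ker_iff_map.mpr hmap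
  have hle := lieD_le_finrank_of_lieSpan_eq_top _ <|
    lieSpan_eq_top_of_isCoatom (LinearMap.isCoatom_ker_of_surjective (LinearMap.surjective hf0))
      (hker (subset_span (by simp))) (hker (subset_span (by simp))) hf
  have := Module.Dual.finrank_ker_add_one_of_ne_zero hf0
  omega

variable (F) in
/-- `ad x` induces multiplication by `c` on `L ⧸ F ∙ x`. -/
def AdEqSMulModSpan (x : L) (c : F) : Prop := ∀ y : L, ⁅x, y⁆ - c • y ∈ F ∙ x

lemma AdEqSMulModSpan.smul {x : L} {c : F} (h : AdEqSMulModSpan F x c) (t : F) :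
    AdEqSMulModSpan F (t • x) (t * c) := fun y => by
  obtain ⟨a, ha⟩ := mem_span_singleton.mp (h y)
  exact mem_span_singleton.mpr ⟨a, by rw [smul_lie, mul_smul, ← smul_sub, ← ha, smul_comm]⟩

lemma AdEqSMulModSpan.eq {x y : L} {c c' : F} (h : AdEqSMulModSpan F x c)
    (h' : AdEqSMulModSpan F x c') (hy : y ∉ F ∙ x) : c = c' := by
  by_contra hne
  have : (c' - c) • y ∈ F ∙ x := by
    simpa [sub_smul] using sub_mem (h y) (h' y)
  exact hy ((smul_mem_iff _ (sub_ne_zero.mpr (Ne.symm hne))).mp this)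

lemma exists_adEqSMulModSpan (hspan : ∀ x y : L, ⁅x, y⁆ ∈ span F {x, y}) (x : L) :
    ∃ c : F, AdEqSMulModSpan F x c := by
  have hx : F ∙ x ≤ (F ∙ x).comap (LieAlgebra.ad F L x) := span_le.mpr <| by simp
  set f := (F ∙ x).mapQ (F ∙ x) (LieAlgebra.ad F L x) hx
  obtain ⟨c, hc⟩ := f.exists_eq_smul_id_of_forall_notLinearIndependent fun v => by
    induction v using Quotient.induction_on with | H y => ?_
    obtain ⟨a, b, hab⟩ := mem_span_pair.mp (hspan x y)
    rw [LinearIndependent.pair_iff]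
    push Not
    refine ⟨b, -1, ?_, by simp⟩
    have : b • y - ⁅x, y⁆ ∈ F ∙ x := by
      rw [← hab]; simpa using neg_mem (smul_mem _ a (mem_span_singleton_self x))
    simp only [f, mapQ_apply, LieAlgebra.ad_apply, neg_one_smul, ← sub_eq_add_neg,
      ← Quotient.mk_smul, ← Quotient.mk_sub, Quotient.mk_eq_zero]
    exact this
  refine ⟨c, fun y => ?_⟩
  have := LinearMap.congr_fun hc ((F ∙ x).mkQ y)
  rw [← Quotient.mk_eq_zero]
  simpa [f, sub_eq_zero] using this

lemma exists_dual_lie_eq_of_forall_exists_notMem (hspan : ∀ x y : L, ⁅x, y⁆ ∈ span F {x, y})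
    (hdim : ∀ x : L, ∃ y, y ∉ F ∙ x) :
    ∃ lam : Module.Dual F L, ∀ x y, ⁅x, y⁆ = lam x • y - lam y • x := by
  choose l hl using exists_adEqSMulModSpan hspan
  have l_smul (t : F) (x : L) : l (t • x) = t * l x := by
    obtain ⟨y, hy⟩ := hdim (t • x)
    exact ((hl x).smul t).eq (hl (t • x)) hy |>.symm
  have lie_eq (x y : L) : ⁅x, y⁆ = l x • y - l y • x := by
    by_cases hy : y ∈ F ∙ x
    · obtain ⟨t, rfl⟩ := mem_span_singleton.mp hy
      rw [l_smul, lie_smul, lie_self]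
      module
    obtain rfl | hx := eq_or_ne x 0
    · simp [show l 0 = 0 by simpa using l_smul 0 0]
    obtain ⟨a, ha⟩ := mem_span_singleton.mp (hl x y)
    obtain ⟨b, hb⟩ := mem_span_singleton.mp (hl y x)
    have hxy : LinearIndependent F ![x, y] :=
      (LinearIndependent.pair_iff' hx).mpr fun t h =>
        hy (h ▸ smul_mem _ t (mem_span_singleton_self x))
    have hsum : (a + l y) • x + (b + l x) • y = 0 := by
      linear_combination (norm := module) ha + hb - lie_skew y x
    obtain ⟨hay, -⟩ := LinearIndependent.pair_iff.mp hxy _ _ hsum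
    rw [eq_neg_of_add_eq_zero_left hay] at ha
    linear_combination (norm := module) -ha
  obtain ⟨y₀, hy₀⟩ := hdim 0
  have hy₀ : y₀ ≠ 0 := by rintro rfl; exact hy₀ (zero_mem _)
  have l_add (x x' : L) : l (x + x') = l x + l x' := by
    have h := lie_eq (x + x') y₀
    rw [add_lie, lie_eq x, lie_eq x'] at h
    have : (l (x + x') - (l x + l x')) • y₀ = 0 := by
      linear_combination (norm := module) -h
    exact sub_eq_zero.mp ((smul_eq_zero.mp this).resolve_right hy₀)
  exact ⟨⟨⟨l, l_add⟩, l_smul⟩, lie_eq⟩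

lemma exists_dual_lie_eq (hspan : ∀ x y : L, ⁅x, y⁆ ∈ span F {x, y}) :
    ∃ lam : Module.Dual F L, ∀ x y, ⁅x, y⁆ = lam x • y - lam y • x := by
  by_cases hdim : ∀ x : L, ∃ y, y ∉ F ∙ x
  · exact exists_dual_lie_eq_of_forall_exists_notMem hspan hdim
  push Not at hdim
  obtain ⟨z, hz⟩ := hdim
  refine ⟨0, fun x y => ?_⟩
  obtain ⟨a, rfl⟩ := mem_span_singleton.mp (hz x)
  obtain ⟨b, rfl⟩ := mem_span_singleton.mp (hz y)
  simp

def kerLieIdeal (lam : Module.Dual F L) (hlam : ∀ x y : L, lam ⁅x, y⁆ = 0) : LieIdeal F L :=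
  { LinearMap.ker lam with lie_mem := fun {x y} _ => hlam x y }

end

/-- Let `L` be a finite-dimensional Lie algebra over a field `F` whose minimal number of
generators equals its dimension.  Then either `L` is abelian, or `L = F·x ⊕ A` where `A` is
an abelian ideal of codimension `1` and `ad x` restricted to `A` is the identity. -/
theorem stmt_0 (F L : Type*) [Field F] [LieRing L] [LieAlgebra F L]
    [FiniteDimensional F L] (h : lieD F L = Module.finrank F L) :
    IsLieAbelian L ∨
      ∃ (x : L) (A : LieIdeal F L), IsLieAbelian A ∧
        Module.finrank F A = Module.finrank F L - 1 ∧
        Submodule.span F {x} ⊓ A.toSubmodule = ⊥ ∧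
        Submodule.span F {x} ⊔ A.toSubmodule = ⊤ ∧
        ∀ a ∈ A, ⁅x, a⁆ = a := by
  by_cases habl : IsLieAbelian L
  · exact Or.inl habl
  obtain ⟨lam, hlie⟩ := exists_dual_lie_eq (lie_mem_span_pair_of_lieD_eq_finrank h)
  have hlam : lam ≠ 0 := by
    rintro rfl
    exact habl ⟨fun x y => by simp [hlie x y]⟩
  obtain ⟨x, hx⟩ := LinearMap.surjective hlam 1
  let A := kerLieIdeal lam fun y z => by simp [hlie y z, mul_comm]
  have hcompl : IsCompl (F ∙ x) A.toSubmodule := IsCompl.symm <|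
    isCompl_span_singleton_of_isCoatom_of_notMem
      (LinearMap.isCoatom_ker_of_surjective (LinearMap.surjective hlam))
      (show lam x ≠ 0 from hx ▸ one_ne_zero)
  refine Or.inr ⟨x, A, ⟨fun a b => Subtype.ext ?_⟩, ?_, hcompl.inf_eq_bot, hcompl.sup_eq_top,
    fun a ha => ?_⟩
  · simp [hlie, show lam a = 0 from a.2, show lam b = 0 from b.2]
  · have := Module.Dual.finrank_ker_add_one_of_ne_zero hlam
    change Module.finrank F (LinearMap.ker lam) = _
    omega
  · simp [hlie, hx, show lam a = 0 from ha]
end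

section
/- Let M be a finitely generated ℤ_p[C_p]-module that is free as a ℤ_p-module, decomposing as M ≅ n₁·I₁ ⊕ n₂·I₂ ⊕ n₃·I₃ with I₁ the trivial rank-1 module, I₂ = ℤ_p[C_p]/(Φ_p(z)) of rank p−1, and I₃ = ℤ_p[C_p] of rank p. If the ℚ_p[C_p]-module ℳ = ℚ_p ⊗ M satisfies 1 + d(ℳ) ≥ dim_{ℚ_p} ℳ, then 1 + max{0, n₂ − n₁} ≥ (p−1)(n₂ + n₃). -/
/-!
Since `Φ_p(1) = p` is invertible in `ℚ_p`, the ideals `(z - 1)` and `(Φ_p(z))` of `ℚ_p[C_p]` are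
comaximal, so by the Chinese remainder theorem a single generator covers one copy of `I₁` and one
of `I₂` at once. Hence `d(ℳ) ≤ max(n₁, n₂) + n₃`, and the hypothesis
`1 + d(ℳ) ≥ n₁ + (p - 1) n₂ + p n₃` rearranges to the claim.
-/

set_option synthInstance.maxHeartbeats 1000000
set_option maxHeartbeats 1000000

/-- The minimal number of generators of a module `M` over a ring `R`. -/
noncomputable def moduleD (R M : Type*) [Ring R] [AddCommGroup M] [Module R M] : ℕ :=
  sInf {n | ∃ s : Finset M, s.card = n ∧ Submodule.span R (↑s : Set M) = ⊤}

theorem moduleD_le_card_of_surjective {R M ι : Type*} [Ring R] [AddCommGroup M] [Module R M]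
    [Fintype ι] (f : (ι → R) →ₗ[R] M) (hf : Function.Surjective f) :
    moduleD R M ≤ Fintype.card ι := by
  classical
  let b := Pi.basisFun R ι
  have hspan : Submodule.span R (↑(Finset.univ.image (f ∘ b)) : Set M) = ⊤ := by
    rw [Finset.coe_image, Finset.coe_univ, Set.image_univ, Set.range_comp, Submodule.span_image,
      b.span_eq, Submodule.map_top, LinearMap.range_eq_top.mpr hf]
  exact le_trans (Nat.sInf_le ⟨_, rfl, hspan⟩) Finset.card_image_le

theorem Ideal.Quotient.mk_prod_surjective_of_isCoprime {R : Type*} [CommRing R] {I J : Ideal R}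
    (h : IsCoprime I J) :
    Function.Surjective fun x : R => (Ideal.Quotient.mk I x, Ideal.Quotient.mk J x) := by
  intro ab
  obtain ⟨y, rfl⟩ := (Ideal.quotientInfEquivQuotientProd I J h).surjective ab
  obtain ⟨x, rfl⟩ := Ideal.Quotient.mk_surjective y
  exact ⟨x, rfl⟩

theorem exists_fin_castLE_quotient_eq {R : Type*} [CommRing R] {I J : Ideal R} (h : IsCoprime I J)
    {n₁ n₂ m : ℕ} (h₁ : n₁ ≤ m) (h₂ : n₂ ≤ m) (a : Fin n₁ → R ⧸ I) (b : Fin n₂ → R ⧸ J) :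
    ∃ y : Fin m → R, (∀ i, Ideal.Quotient.mk I (y (Fin.castLE h₁ i)) = a i) ∧
      ∀ i, Ideal.Quotient.mk J (y (Fin.castLE h₂ i)) = b i := by
  obtain ⟨a', rfl⟩ := (Fin.castLE_injective h₁).surjective_comp_right a
  obtain ⟨b', rfl⟩ := (Fin.castLE_injective h₂).surjective_comp_right b
  choose y hy using fun i => Ideal.Quotient.mk_prod_surjective_of_isCoprime h (a' i, b' i)
  exact ⟨y, fun i => congr_arg Prod.fst (hy _), fun i => congr_arg Prod.snd (hy _)⟩

theorem moduleD_pi_quotient_prod_pi_quotient_prod_pi_le {R : Type*} [CommRing R]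
    {I J : Ideal R} (h : IsCoprime I J) (n₁ n₂ n₃ : ℕ) :
    moduleD R ((Fin n₁ → R ⧸ I) × (Fin n₂ → R ⧸ J) × (Fin n₃ → R)) ≤ max n₁ n₂ + n₃ := by
  have h₁ := le_max_left n₁ n₂
  have h₂ := le_max_right n₁ n₂
  let f : (Fin (max n₁ n₂) ⊕ Fin n₃ → R) →ₗ[R] _ :=
    LinearMap.prod (LinearMap.pi fun i => I.mkQ ∘ₗ LinearMap.proj (.inl (Fin.castLE h₁ i)))
      (LinearMap.prod (LinearMap.pi fun i => J.mkQ ∘ₗ LinearMap.proj (.inl (Fin.castLE h₂ i)))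
        (LinearMap.funLeft R R Sum.inr))
  have hf : Function.Surjective f := by
    rintro ⟨a, b, c⟩
    obtain ⟨y, hya, hyb⟩ := exists_fin_castLE_quotient_eq h h₁ h₂ a b
    refine ⟨Sum.elim y c, ?_⟩
    ext i <;> simp [f, hya, hyb]
  simpa using moduleD_le_card_of_surjective f hf

theorem isCoprime_span_sub_one_span_aeval_cyclotomic {K R : Type*} [CommRing K] [CommRing R]
    [Algebra K R] {p : ℕ} [Fact p.Prime] (hp : IsUnit (p : R)) (z : R) :
    IsCoprime (Ideal.span {z - 1})
      (Ideal.span {Polynomial.aeval z (Polynomial.cyclotomic p K)}) := by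
  rw [Ideal.isCoprime_span_singleton_iff]
  have hΦ :
      Polynomial.aeval z (Polynomial.cyclotomic p K) = (Polynomial.cyclotomic p R).eval z := by
    rw [Polynomial.aeval_def, Polynomial.eval₂_eq_eval_map, Polynomial.map_cyclotomic]
  -- `Φ_p(1) = p` is a unit, and `Φ_p(z) ≡ Φ_p(1) mod (z - 1)`.
  obtain ⟨q, hq⟩ : z - 1 ∣ (Polynomial.cyclotomic p R).eval z - p := by
    simpa [Polynomial.eval_one_cyclotomic_prime] using
      Polynomial.sub_dvd_eval_sub z 1 (Polynomial.cyclotomic p R)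
  rw [hΦ, ← sub_add_cancel ((Polynomial.cyclotomic p R).eval z) (p : R), hq, add_comm]
  exact IsCoprime.add_mul_left_right ⟨0, ↑hp.unit⁻¹, by simp⟩ q

/-- Let `M` be a finitely generated `ℤₚ[C_p]`-module, free as a `ℤₚ`-module, decomposing as
`M ≅ n₁·I₁ ⊕ n₂·I₂ ⊕ n₃·I₃` where `I₁ = ℤₚ[C_p]/(z-1)` is the trivial rank-one module,
`I₂ = ℤₚ[C_p]/(Φ_p(z))` and `I₃ = ℤₚ[C_p]`.  If the `ℚₚ[C_p]`-module `ℳ = ℚₚ ⊗ M`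
(which correspondingly decomposes, with `dim_{ℚₚ} ℳ = n₁ + (p-1)n₂ + p·n₃`) satisfies
`1 + d(ℳ) ≥ dim_{ℚₚ} ℳ`, then `1 + max(0, n₂ - n₁) ≥ (p-1)(n₂ + n₃)`. -/
theorem stmt_10 (p : ℕ) [Fact p.Prime] (n₁ n₂ n₃ : ℕ) :
    letI S := MonoidAlgebra ℤ_[p] (Multiplicative (ZMod p))
    letI zS : S := MonoidAlgebra.of ℤ_[p] (Multiplicative (ZMod p)) (Multiplicative.ofAdd 1)
    letI R := MonoidAlgebra ℚ_[p] (Multiplicative (ZMod p))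
    letI z : R := MonoidAlgebra.of ℚ_[p] (Multiplicative (ZMod p)) (Multiplicative.ofAdd 1)
    ∀ (M : Type) [AddCommGroup M] [Module S M],
      (Nonempty (M ≃ₗ[S]
        ((Fin n₁ → S ⧸ Ideal.span {zS - 1}) ×
         (Fin n₂ → S ⧸ Ideal.span {Polynomial.aeval zS (Polynomial.cyclotomic p ℤ_[p])}) ×
         (Fin n₃ → S)))) →
      1 + moduleD R
          ((Fin n₁ → R ⧸ Ideal.span {z - 1}) ×
           (Fin n₂ → R ⧸ Ideal.span {Polynomial.aeval z (Polynomial.cyclotomic p ℚ_[p])}) ×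
           (Fin n₃ → R)) ≥ n₁ + (p - 1) * n₂ + p * n₃ →
      1 + max 0 (n₂ - n₁) ≥ (p - 1) * (n₂ + n₃) := by
  intro M _ _ _ hdim
  have hp : IsUnit (p : MonoidAlgebra ℚ_[p] (Multiplicative (ZMod p))) := by
    rw [← map_natCast (algebraMap ℚ_[p] _)]
    exact (isUnit_iff_ne_zero.mpr (Nat.cast_ne_zero.mpr (Fact.out : p.Prime).ne_zero)).map _
  have hd := moduleD_pi_quotient_prod_pi_quotient_prod_pi_le
    (isCoprime_span_sub_one_span_aeval_cyclotomic (K := ℚ_[p]) hp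
      (MonoidAlgebra.of ℚ_[p] (Multiplicative (ZMod p)) (Multiplicative.ofAdd 1))) n₁ n₂ n₃
  obtain ⟨q, rfl⟩ := Nat.exists_eq_add_one_of_ne_zero (Fact.out : p.Prime).ne_zero
  simp only [Nat.add_sub_cancel, add_mul, mul_add, one_mul] at hdim ⊢
  generalize q * n₂ = A at *
  generalize q * n₃ = B at *
  omega
end
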